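/- The greatest fuzzy auto-simulation of a fuzzy automaton A is a fuzzy pre-order (reflexive and transitive fuzzy relation) and its norm equals 1. -/

import Mathlib

/-- A complete residuated lattice: a complete lattice with a commutative monoid
structure whose unit is the top element, together with a residuum `himp`
satisfying the adjointness property. -/
class CompleteResiduatedLattice (L : Type*) extends CompleteLattice L, CommMonoid L where
  himp : L → L → L
  adjoint : ∀ a b c : L, a * b ≤ c ↔ a ≤ himp b c
  one_eq_top : (1 : L) = ⊤

open CompleteResiduatedLattice

variable {L : Type*} [CompleteResiduatedLattice L]

/-- Sup-⊗ composition of fuzzy relations. -/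
def relComp {X Y Z : Type*} (φ : X → Y → L) (ψ : Y → Z → L) : X → Z → L :=
  fun x z => ⨆ y, φ x y * ψ y z

/-- Composition of a fuzzy relation with a fuzzy set. -/
def relSet {X Y : Type*} (φ : X → Y → L) (g : Y → L) : X → L :=
  fun x => ⨆ y, φ x y * g y

/-- Composition of a fuzzy set with a fuzzy relation. -/
def setRel {X Y : Type*} (f : X → L) (φ : X → Y → L) : Y → L :=
  fun y => ⨆ x, f x * φ x y

/-- The converse of a fuzzy relation. -/
def conv {X Y : Type*} (φ : X → Y → L) : Y → X → L := fun y x => φ x y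

/-- The fuzzy degree of inclusion of fuzzy sets. -/
def fuzS {X : Type*} (f g : X → L) : L := ⨅ x, himp (f x) (g x)

/-- The fuzzy degree of equality of fuzzy sets. -/
def fuzE {X : Type*} (f g : X → L) : L := ⨅ x, himp (f x) (g x) ⊓ himp (g x) (f x)

/-- A fuzzy automaton over the alphabet `Sig` with state set `A`. -/
structure FuzzyAutomaton (L : Type*) (Sig : Type*) (A : Type*) where
  δ : A → Sig → A → L
  σ : A → L
  τ : A → L

variable {Sig : Type*}

/-- A fuzzy simulation between two fuzzy automata. -/
def IsFuzzySimulation {A A' : Type*} (M : FuzzyAutomaton L Sig A)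
    (M' : FuzzyAutomaton L Sig A') (φ : A → A' → L) : Prop :=
  (∀ s, relComp (conv φ) (fun x y => M.δ x s y) ≤
        relComp (fun x' y' => M'.δ x' s y') (conv φ)) ∧
  relSet (conv φ) M.τ ≤ M'.τ

/-- The norm of a fuzzy simulation: `S(σ^A, σ^{A'} ∘ φ⁻¹)`. -/
def simNorm {A A' : Type*} (M : FuzzyAutomaton L Sig A)
    (M' : FuzzyAutomaton L Sig A') (φ : A → A' → L) : L :=
  fuzS M.σ (setRel M'.σ (conv φ))

/-- A fuzzy bisimulation between two fuzzy automata. -/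
def IsFuzzyBisimulation {A A' : Type*} (M : FuzzyAutomaton L Sig A)
    (M' : FuzzyAutomaton L Sig A') (φ : A → A' → L) : Prop :=
  IsFuzzySimulation M M' φ ∧ IsFuzzySimulation M' M (conv φ)

/-- The norm of a fuzzy bisimulation. -/
def bisimNorm {A A' : Type*} (M : FuzzyAutomaton L Sig A)
    (M' : FuzzyAutomaton L Sig A') (φ : A → A' → L) : L :=
  simNorm M M' φ ⊓ simNorm M' M (conv φ)

/-- The fuzzy language recognized from a given state:
`L(A,x)(s₁…sₙ) = (δ_{s₁} ∘ … ∘ δ_{sₙ} ∘ τ)(x)`. -/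
def langFrom {A : Type*} (M : FuzzyAutomaton L Sig A) : A → List Sig → L
  | x, [] => M.τ x
  | x, s :: w => ⨆ y, M.δ x s y * langFrom M y w

/-- The fuzzy language recognized by a fuzzy automaton. -/
def lang {A : Type*} (M : FuzzyAutomaton L Sig A) (w : List Sig) : L :=
  ⨆ x, M.σ x * langFrom M x w

/-! The identity relation is an auto-simulation, and fuzzy simulations are closed under sup-⊗
composition and under arbitrary pointwise joins. Hence the greatest auto-simulation `g` lies above
the identity and above `g ∘ g`. Reflexivity of `g` gives `σ ≤ σ ∘ g⁻¹`, so the norm is `1`. -/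

theorem gc_mul_himp (b : L) : GaloisConnection (· * b) (himp b) :=
  fun a c => adjoint a b c

instance : IsQuantale L where
  sSup_mul_distrib s b := (gc_mul_himp b).l_sSup
  mul_sSup_distrib a s := by
    simpa only [mul_comm a] using (gc_mul_himp a).l_sSup (s := s)

theorem one_le_himp_of_le {b c : L} (h : b ≤ c) : 1 ≤ himp b c :=
  (adjoint 1 b c).mp (by rwa [one_mul])

theorem fuzS_eq_one_of_le {X : Type*} {f g : X → L} (h : f ≤ g) : fuzS f g = 1 :=
  le_antisymm (one_eq_top (L := L) ▸ le_top) (le_iInf fun x => one_le_himp_of_le (h x))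

open Quantale

section Simulation

variable {A A' A'' : Type*} {M : FuzzyAutomaton L Sig A} {M' : FuzzyAutomaton L Sig A'}
  {M'' : FuzzyAutomaton L Sig A''}

theorem isFuzzySimulation_iff {φ : A → A' → L} :
    IsFuzzySimulation M M' φ ↔
      (∀ s x x' y, φ x x' * M.δ x s y ≤ ⨆ y', M'.δ x' s y' * φ y y') ∧
        ∀ x x', φ x x' * M.τ x ≤ M'.τ x' := by
  simp only [IsFuzzySimulation, Pi.le_def, relComp, relSet, conv, iSup_le_iff]
  exact ⟨fun ⟨hδ, hτ⟩ => ⟨fun s x x' y => hδ s x' y x, fun x x' => hτ x' x⟩,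
    fun ⟨hδ, hτ⟩ => ⟨fun s x' y x => hδ s x x' y, fun x' x => hτ x x'⟩⟩

open Classical in
theorem isFuzzySimulation_id :
    IsFuzzySimulation M M (fun x y => if x = y then (1 : L) else ⊥) := by
  refine isFuzzySimulation_iff.mpr ⟨fun s x x' y => ?_, fun x x' => ?_⟩
  · split_ifs with hxx'
    · subst hxx'
      simpa using le_iSup (fun y' => M.δ x s y' * if y = y' then (1 : L) else ⊥) y
    · simp
  · split_ifs with hxx'
    · simp [hxx']
    · simp

theorem IsFuzzySimulation.relComp {φ : A → A' → L} {ψ : A' → A'' → L}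
    (hφ : IsFuzzySimulation M M' φ) (hψ : IsFuzzySimulation M' M'' ψ) :
    IsFuzzySimulation M M'' (relComp φ ψ) := by
  obtain ⟨hφδ, hφτ⟩ := isFuzzySimulation_iff.mp hφ
  obtain ⟨hψδ, hψτ⟩ := isFuzzySimulation_iff.mp hψ
  refine isFuzzySimulation_iff.mpr ⟨fun s x x'' y => ?_, fun x x'' => ?_⟩
  · simp only [_root_.relComp, iSup_mul_distrib, iSup_le_iff]
    intro x'
    calc φ x x' * ψ x' x'' * M.δ x s y
        = ψ x' x'' * (φ x x' * M.δ x s y) := by ac_rfl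
      _ ≤ ψ x' x'' * ⨆ y', M'.δ x' s y' * φ y y' := mul_le_mul_right (hφδ s x x' y) _
      _ = ⨆ y', ψ x' x'' * M'.δ x' s y' * φ y y' := by
        simp only [mul_iSup_distrib, mul_assoc]
      _ ≤ ⨆ y', (⨆ y'', M''.δ x'' s y'' * ψ y' y'') * φ y y' :=
        iSup_mono fun y' => mul_le_mul_left (hψδ s x' x'' y') _
      _ = ⨆ y', ⨆ y'', M''.δ x'' s y'' * (φ y y' * ψ y' y'') := by
        simp only [iSup_mul_distrib, mul_assoc, mul_comm (ψ _ _)]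
      _ = ⨆ y'', M''.δ x'' s y'' * ⨆ y', φ y y' * ψ y' y'' := by
        rw [iSup_comm]
        simp only [mul_iSup_distrib]
  · simp only [_root_.relComp, iSup_mul_distrib, iSup_le_iff]
    intro x'
    calc φ x x' * ψ x' x'' * M.τ x
        = ψ x' x'' * (φ x x' * M.τ x) := by ac_rfl
      _ ≤ ψ x' x'' * M'.τ x' := mul_le_mul_right (hφτ x x') _
      _ ≤ M''.τ x'' := hψτ x' x''

theorem isFuzzySimulation_biSup {S : Set (A → A' → L)}
    (hS : ∀ φ ∈ S, IsFuzzySimulation M M' φ) :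
    IsFuzzySimulation M M' (fun x x' => ⨆ φ ∈ S, φ x x') := by
  refine isFuzzySimulation_iff.mpr ⟨fun s x x' y => ?_, fun x x' => ?_⟩
  · simp only [(gc_mul_himp _).l_iSup₂, iSup₂_le_iff]
    intro φ hφ
    refine ((isFuzzySimulation_iff.mp (hS φ hφ)).1 s x x' y).trans (iSup_mono fun y' => ?_)
    exact mul_le_mul_right (le_biSup (fun ψ => ψ y y') hφ) _
  · simp only [(gc_mul_himp _).l_iSup₂, iSup₂_le_iff]
    exact fun φ hφ => (isFuzzySimulation_iff.mp (hS φ hφ)).2 x x'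

variable (M M') in
def greatestFuzzySimulation : A → A' → L :=
  fun x x' => ⨆ φ ∈ {φ : A → A' → L | IsFuzzySimulation M M' φ}, φ x x'

theorem isFuzzySimulation_greatestFuzzySimulation :
    IsFuzzySimulation M M' (greatestFuzzySimulation M M') :=
  isFuzzySimulation_biSup fun _ => id

theorem IsFuzzySimulation.le_greatestFuzzySimulation {φ : A → A' → L}
    (hφ : IsFuzzySimulation M M' φ) (x : A) (x' : A') :
    φ x x' ≤ greatestFuzzySimulation M M' x x' :=
  le_biSup (fun ψ : A → A' → L => ψ x x') hφ

theorem simNorm_eq_one_of_reflexive {φ : A → A → L} (hφ : ∀ x, 1 ≤ φ x x) :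
    simNorm M M φ = 1 :=
  fuzS_eq_one_of_le fun x =>
    (le_mul_of_one_le_right' (hφ x)).trans (le_iSup (fun z => M.σ z * φ x z) x)

end Simulation

theorem stmt11_general {A : Type*} (M : FuzzyAutomaton L Sig A) :
    letI g : A → A → L := fun x y => ⨆ φ ∈ {φ : A → A → L | IsFuzzySimulation M M φ}, φ x y
    (∀ x, (1 : L) ≤ g x x) ∧ relComp g g ≤ g ∧ simNorm M M g = 1 := by
  show (∀ x, 1 ≤ greatestFuzzySimulation M M x x) ∧ _ ∧ _
  have hg := isFuzzySimulation_greatestFuzzySimulation (M := M) (M' := M)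
  have hrefl : ∀ x, 1 ≤ greatestFuzzySimulation M M x x := fun x => by
    classical
    simpa using isFuzzySimulation_id.le_greatestFuzzySimulation x x
  exact ⟨hrefl, fun x y => (hg.relComp hg).le_greatestFuzzySimulation x y,
    simNorm_eq_one_of_reflexive hrefl⟩

theorem stmt11 {A : Type*} [Nonempty A] (M : FuzzyAutomaton L Sig A) :
    letI g : A → A → L := fun x y => ⨆ φ ∈ {φ : A → A → L | IsFuzzySimulation M M φ}, φ x y
    (∀ x, (1 : L) ≤ g x x) ∧ relComp g g ≤ g ∧ simNorm M M g = 1 :=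
  stmt11_general M
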